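/- arXiv:2410.00556 — 4 statements merged into one kernel-verified Lean document; each statement's English description precedes it below -/
import Mathlib

section
/- Let G be a group, a ∈ G, and suppose a admits unique roots in the following sense: whenever x^m = y^m with m ≠ 0 then x = y, and suppose moreover that ⟨a⟩ is malnormal in G. If φ ∈ Aut(G) satisfies φ(a)^m = a^n for nonzero integers m, n, and a has infinite order, then m = ±n and φ(a) = a^{±1}; in particular φ²(a) = a. -/
/-- The subgroup of inner automorphisms of `G`. -/
def Inn (G : Type*) [Group G] : Subgroup (MulAut G) :=
  (MulAut.conj : G →* MulAut G).range

instance Inn.normal (G : Type*) [Group G] : (Inn G).Normal := by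
  constructor
  rintro x ⟨g, rfl⟩ φ
  refine ⟨φ g, ?_⟩
  ext h
  simp [MulAut.conj_apply, mul_assoc]

/-- The outer automorphism group of `G`. -/
abbrev Out (G : Type*) [Group G] := MulAut G ⧸ Inn G

/-- The natural projection `Aut(G) → Out(G)`. -/
abbrev Out.mk {G : Type*} [Group G] : MulAut G →* Out G := QuotientGroup.mk' (Inn G)

/-- The subgroup of automorphisms preserving a subgroup `H`. -/
def autStab {G : Type*} [Group G] (H : Subgroup G) : Subgroup (MulAut G) where
  carrier := {φ | ∀ x, x ∈ H ↔ φ x ∈ H}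
  one_mem' := by intro x; simp
  mul_mem' := by
    intro φ ψ hφ hψ x
    simpa using (hψ x).trans (hφ (ψ x))
  inv_mem' := by
    intro φ hφ x
    simpa using (hφ (φ⁻¹ x)).symm

/-- The automorphisms of `G` which descend to an inner automorphism of `G ⧸ K`. -/
def principalCongruence {G : Type*} [Group G] (K : Subgroup G) [K.Normal] :
    Subgroup (MulAut G) where
  carrier := {φ | ∃ g : G, ∀ x : G, ((φ x : G) : G ⧸ K) = ((g * x * g⁻¹ : G) : G ⧸ K)}
  one_mem' := ⟨1, by simp⟩
  mul_mem' := by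
    rintro φ ψ ⟨g, hg⟩ ⟨h, hh⟩
    refine ⟨g * h, fun x => ?_⟩
    have h1 := hg (ψ x)
    have h2 := hh x
    simp only [MulAut.mul_apply, QuotientGroup.mk_mul, QuotientGroup.mk_inv, mul_inv_rev] at *
    rw [h1, h2]
    simp [mul_assoc]
  inv_mem' := by
    rintro φ ⟨g, hg⟩
    refine ⟨g⁻¹, fun x => ?_⟩
    have h1 := hg (φ⁻¹ x)
    rw [MulAut.apply_inv_self] at h1
    simp only [QuotientGroup.mk_mul, QuotientGroup.mk_inv, inv_inv] at *
    rw [h1]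
    group

/-- `Δ₁` is a congruence subgroup of `Δ ≤ Out(G)`: it is contained in `Δ` and contains
the principal congruence subgroup of `Δ` associated to some finite-index characteristic
subgroup `K` of `G`. -/
def IsCongruence {G : Type*} [Group G] (Δ Δ₁ : Subgroup (Out G)) : Prop :=
  Δ₁ ≤ Δ ∧ ∃ (K : Subgroup G) (hN : K.Normal), K.Characteristic ∧ K.FiniteIndex ∧
    Δ ⊓ (@principalCongruence G _ K hN).map Out.mk ≤ Δ₁

/-- A family of subgroups `P i` of `G` is malnormal if `g (P i) g⁻¹ ∩ P j ≠ 1` implies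
`i = j` and `g ∈ P i`. -/
def IsMalnormalFamily {G : Type*} [Group G] {ι : Type*} (P : ι → Subgroup G) : Prop :=
  ∀ (i j : ι) (g : G), (∃ x ∈ P i, g * x * g⁻¹ ∈ P j ∧ x ≠ 1) → i = j ∧ g ∈ P i

/-- A family of cyclic subgroups `⟨γ i⟩` is omnipotent with constant `K > 0` if for every
choice of positive integers `n i` there is a homomorphism `f` to a finite group with
`orderOf (f (γ i)) = K * n i`. -/
def IsOmnipotent {G : Type*} [Group G] {ι : Type*} (γ : ι → G) (K : ℕ) : Prop :=
  0 < K ∧ ∀ n : ι → ℕ, (∀ i, 0 < n i) →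
    ∃ (Q : Type) (_ : Group Q) (_ : Finite Q) (f : G →* Q),
      ∀ i, orderOf (f (γ i)) = K * n i

theorem stmt11 {G : Type*} [Group G] (a : G)
    (hroots : ∀ (x y : G) (m : ℤ), m ≠ 0 → x ^ m = y ^ m → x = y)
    (hmal : IsMalnormalFamily fun _ : Unit => Subgroup.zpowers a)
    (hinf : ¬IsOfFinOrder a)
    (φ : MulAut G) (m n : ℤ) (hm : m ≠ 0) (hn : n ≠ 0) (h : φ a ^ m = a ^ n) :
    (m = n ∨ m = -n) ∧ (φ a = a ∨ φ a = a⁻¹) ∧ φ (φ a) = a := by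
  have hinj : Function.Injective fun k : ℤ => a ^ k :=
    injective_zpow_iff_not_isOfFinOrder.mpr hinf
  have hzinj : ∀ p q : ℤ, a ^ p = a ^ q → p = q := fun p q hpq => hinj hpq
  have han : a ^ n ≠ 1 := by
    intro hcontr
    exact hn (hzinj n 0 (by simpa using hcontr))
  have hconj1 : φ a * a ^ n * (φ a)⁻¹ = a ^ n := by rw [← h]; group
  have h1 : φ a ∈ Subgroup.zpowers a :=
    (hmal () () (φ a) ⟨a ^ n, Subgroup.zpow_mem _ (Subgroup.mem_zpowers a) n,
      by rw [hconj1]; exact Subgroup.zpow_mem _ (Subgroup.mem_zpowers a) n, han⟩).2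
  obtain ⟨k, hk⟩ := h1
  simp only [] at hk
  have hφinv : a = (φ⁻¹ a) ^ k := by
    have hthis : φ⁻¹ (a ^ k) = a := by rw [hk, MulAut.inv_apply_self]
    rw [← map_zpow]
    exact hthis.symm
  have ha1 : a ≠ 1 := fun hc => hinf (hc ▸ IsOfFinOrder.one)
  have hcomm : Commute (φ⁻¹ a) a := by
    conv_rhs => rw [hφinv]
    exact Commute.zpow_right (Commute.refl _) k
  have hconj2 : φ⁻¹ a * a * (φ⁻¹ a)⁻¹ = a := by rw [hcomm.eq, mul_inv_cancel_right]
  have h2 : φ⁻¹ a ∈ Subgroup.zpowers a :=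
    (hmal () () (φ⁻¹ a) ⟨a, Subgroup.mem_zpowers a,
      by rw [hconj2]; exact Subgroup.mem_zpowers a, ha1⟩).2
  obtain ⟨j, hj⟩ := h2
  simp only [] at hj
  have hjk1 : j * k = 1 := hzinj (j * k) 1 (by rw [zpow_mul, hj, ← hφinv, zpow_one])
  have hkmn : k * m = n := hzinj (k * m) n (by rw [zpow_mul, hk, h])
  have hk1 : k = 1 ∨ k = -1 := by
    rcases Int.isUnit_iff.mp (IsUnit.of_mul_eq_one (a := k) j (by linarith)) with h' | h'
    · exact Or.inl h'
    · exact Or.inr h'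
  rcases hk1 with rfl | rfl
  · rw [zpow_one] at hk
    exact ⟨Or.inl (by linarith), Or.inl hk.symm, by rw [← hk, ← hk]⟩
  · rw [zpow_neg_one] at hk
    refine ⟨Or.inr (by linarith), Or.inr hk.symm, ?_⟩
    rw [← hk, map_inv, ← hk, inv_inv]
end

section
/- In a torsion-free group G with the unique-roots property (x^m = y^m for m ≥ 1 implies x = y) in which the centralizer of every nontrivial element is cyclic, if a ∈ G is nontrivial and an element b satisfies b a^m b⁻¹ = a^n for nonzero integers m, n, then m = ±n. -/
/-- A monoid is torsion-free if no nontrivial elements have finite order. -/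
def Monoid.IsTorsionFree (G : Type*) [Monoid G] : Prop :=
  ∀ g : G, g ≠ 1 → ¬IsOfFinOrder g

lemma aux_zpow_ne_one {G : Type*} [Group G] (htf : Monoid.IsTorsionFree G) {a : G}
    (ha : a ≠ 1) {k : ℤ} (hk : k ≠ 0) : a ^ k ≠ 1 := fun h =>
  htf a ha (isOfFinOrder_iff_zpow_eq_one.mpr ⟨k, hk, h⟩)

theorem stmt12 {G : Type*} [Group G] (htf : Monoid.IsTorsionFree G)
    (hroots : ∀ (x y : G) (m : ℕ), 1 ≤ m → x ^ m = y ^ m → x = y)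
    (hcent : ∀ g : G, g ≠ 1 → ∃ c : G, Subgroup.centralizer {g} = Subgroup.zpowers c)
    (a b : G) (ha : a ≠ 1) (m n : ℤ) (hm : m ≠ 0) (hn : n ≠ 0)
    (h : b * a ^ m * b⁻¹ = a ^ n) :
    m = n ∨ m = -n := by
  obtain ⟨c, hc⟩ := hcent (a ^ n) (aux_zpow_ne_one htf ha hn)
  have haC : a ∈ Subgroup.centralizer {a ^ n} := by
    intro x hx; rcases hx with rfl; exact ((Commute.refl a).zpow_left n).eq
  rw [hc] at haC
  obtain ⟨k, hk⟩ := haC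
  replace hk : c ^ k = a := hk
  have hc1 : c ≠ 1 := by rintro rfl; rw [one_zpow] at hk; exact ha hk.symm
  have hk0 : k ≠ 0 := by rintro rfl; rw [zpow_zero] at hk; exact ha hk.symm
  have hcinj : Function.Injective fun i : ℤ => c ^ i :=
    injective_zpow_iff_not_isOfFinOrder.mpr (htf c hc1)
  have hca : Commute c a := hk ▸ (Commute.zpow_right (Commute.refl c) k)
  -- b c b⁻¹ ∈ centralizer {a^n}
  have hBC : b * c * b⁻¹ * a ^ n = a ^ n * (b * c * b⁻¹) := by
    have hcm : Commute (a ^ m) c := hca.symm.zpow_left m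
    calc b * c * b⁻¹ * a ^ n = b * c * b⁻¹ * (b * a ^ m * b⁻¹) := by rw [h]
      _ = b * (c * a ^ m) * b⁻¹ := by group
      _ = b * (a ^ m * c) * b⁻¹ := by rw [hcm.eq]
      _ = (b * a ^ m * b⁻¹) * (b * c * b⁻¹) := by group
      _ = a ^ n * (b * c * b⁻¹) := by rw [h]
  have h1 : b * c * b⁻¹ ∈ Subgroup.centralizer {a ^ n} := by
    intro x hx; rcases hx with rfl; exact hBC.symm
  rw [hc] at h1
  obtain ⟨s, hs⟩ := h1
  replace hs : c ^ s = b * c * b⁻¹ := hs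
  -- b⁻¹ c b commutes with a^m
  have hbm : b⁻¹ * a ^ n * b = a ^ m := by rw [← h]; group
  have hcn : Commute c (a ^ n) := hca.zpow_right n
  have h2 : Commute (b⁻¹ * c * b) (a ^ m) := by
    rw [← hbm]
    calc b⁻¹ * c * b * (b⁻¹ * a ^ n * b) = b⁻¹ * (c * a ^ n) * b := by group
      _ = b⁻¹ * (a ^ n * c) * b := by rw [hcn.eq]
      _ = b⁻¹ * a ^ n * b * (b⁻¹ * c * b) := by group
  obtain ⟨d, hd⟩ := hcent (a ^ m) (aux_zpow_ne_one htf ha hm)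
  have haD : a ∈ Subgroup.zpowers d := by
    rw [← hd]; intro x hx; rcases hx with rfl
    exact ((Commute.refl a).zpow_left m).eq
  have hbD : b⁻¹ * c * b ∈ Subgroup.zpowers d := by
    rw [← hd]; intro x hx; rcases hx with rfl; exact h2.symm.eq
  obtain ⟨i, hi⟩ := haD
  obtain ⟨j, hj⟩ := hbD
  replace hi : d ^ i = a := hi
  replace hj : d ^ j = b⁻¹ * c * b := hj
  have h3 : Commute (b⁻¹ * c * b) a := by
    rw [← hi, ← hj]; exact Commute.zpow_zpow (Commute.refl d) j i
  have h4 : b⁻¹ * c * b ∈ Subgroup.centralizer {a ^ n} := by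
    intro x hx; rcases hx with rfl; exact (h3.zpow_right n).symm.eq
  rw [hc] at h4
  obtain ⟨t, ht⟩ := h4
  replace ht : c ^ t = b⁻¹ * c * b := ht
  have hconj' : ∀ x : G, ∀ i : ℤ, (b⁻¹ * x * b) ^ i = b⁻¹ * x ^ i * b := by
    intro x i
    have := @conj_zpow G _ i b⁻¹ x
    rwa [inv_inv] at this
  have h5 : c ^ (t * s) = c ^ (1 : ℤ) := by
    have hback : b⁻¹ * c ^ s * b = c := by rw [hs]; group
    calc c ^ (t * s) = (c ^ t) ^ s := by rw [zpow_mul]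
      _ = (b⁻¹ * c * b) ^ s := by rw [ht]
      _ = b⁻¹ * c ^ s * b := hconj' c s
      _ = c := hback
      _ = c ^ (1 : ℤ) := (zpow_one c).symm
  have hts : t * s = 1 := hcinj h5
  have hs1 : s = 1 ∨ s = -1 :=
    Int.isUnit_iff.mp (IsUnit.of_mul_eq_one (a := s) t (by rw [mul_comm]; exact hts))
  have h6 : c ^ (k * n) = c ^ (s * (k * m)) := by
    calc c ^ (k * n) = (c ^ k) ^ n := by rw [zpow_mul]
      _ = a ^ n := by rw [hk]
      _ = b * a ^ m * b⁻¹ := h.symm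
      _ = b * (c ^ k) ^ m * b⁻¹ := by rw [hk]
      _ = b * c ^ (k * m) * b⁻¹ := by rw [zpow_mul]
      _ = (b * c * b⁻¹) ^ (k * m) := conj_zpow.symm
      _ = (c ^ s) ^ (k * m) := by rw [hs]
      _ = c ^ (s * (k * m)) := by rw [← zpow_mul]
  have h7 : k * n = s * (k * m) := hcinj h6
  rcases hs1 with rfl | rfl
  · left
    have hkmn : k * m = k * n := by linarith
    exact (mul_left_cancel₀ hk0 hkmn)
  · right
    have hkmn : k * n = k * (-m) := by linarith
    have := mul_left_cancel₀ hk0 hkmn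
    omega
end

section
/- In a free group F, every maximal cyclic subgroup ⟨c⟩ (c not a proper power, c ≠ 1) is malnormal: if g c^m g⁻¹ = c^n with m, n ≠ 0, then g ∈ ⟨c⟩ and m = n. -/
set_option linter.unusedSectionVars false
set_option linter.deprecated false

namespace Mal
open FreeGroup List

variable {α : Type*} [DecidableEq α]


variable {α : Type*} [DecidableEq α]

/-- non-cancelling adjacency -/
def Reduced (L : List (α × Bool)) : Prop :=
  List.Chain' (fun x y => ¬(x.1 = y.1 ∧ x.2 = !y.2)) L

theorem reduced_reduce (L : List (α × Bool)) : Reduced (reduce L) := by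
  induction L with
  | nil => simp [Reduced, List.Chain']
  | cons x L ih =>
    rw [reduce.cons]
    rcases h : reduce L with _ | ⟨hd, tl⟩
    · simp [Reduced, List.Chain']
    · rw [h] at ih
      dsimp only
      by_cases hr : x.1 = hd.1 ∧ x.2 = !hd.2
      · simp only [hr, and_self, if_true]
        exact ih.tail
      · simp only [hr, if_false]
        exact (List.isChain_cons_cons.2 ⟨hr, ih⟩)

theorem reduce_eq_self_of_reduced {L : List (α × Bool)} (h : Reduced L) : reduce L = L := by
  induction L with
  | nil => rfl
  | cons x L ih =>
    rw [reduce.cons, ih h.tail]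
    rcases L with _ | ⟨hd, tl⟩
    · rfl
    · have := (List.isChain_cons_cons.1 h).1
      dsimp only
      rw [if_neg this]

theorem toWord_reduced (x : FreeGroup α) : Reduced x.toWord := by
  rw [← reduce_toWord]; exact reduced_reduce _

theorem toWord_mk_eq {L : List (α × Bool)} (h : Reduced L) : (mk L).toWord = L := by
  rw [toWord_mk, reduce_eq_self_of_reduced h]

theorem norm_mk_eq {L : List (α × Bool)} (h : Reduced L) : norm (mk L) = L.length := by
  rw [FreeGroup.norm, toWord_mk_eq h]





/-- cyclically reduced -/
def CyclRed (d : FreeGroup α) : Prop := Reduced (d.toWord ++ d.toWord)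

theorem reduced_append_flatten {L : List (α × Bool)} (hL : Reduced (L ++ L)) :
    ∀ N, Reduced (L ++ (List.replicate N L).flatten) := by
  have hL1 : Reduced L := (List.isChain_append.1 hL).1
  intro N
  induction N with
  | zero => simpa using hL1
  | succ N ih =>
    rw [List.replicate_succ, List.flatten_cons]
    refine List.isChain_append.2 ⟨hL1, ih, ?_⟩
    intro x hx y hy
    refine (List.isChain_append.1 hL).2.2 x hx y ?_
    rcases L with _ | ⟨a, L'⟩
    · simp at hx
    · simp only [List.cons_append, List.head?_cons] at hy ⊢
      exact hy

theorem pow_eq_mk {d : FreeGroup α} (N : ℕ) :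
    d ^ N = mk ((List.replicate N d.toWord).flatten) := by
  induction N with
  | zero =>
    simp only [pow_zero, List.replicate_zero, List.flatten_nil]
    exact (FreeGroup.one_eq_mk).symm ▸ rfl
  | succ N ih =>
    rw [pow_succ, ih, ← FreeGroup.mk_toWord (x := d), FreeGroup.mul_mk,
      FreeGroup.mk_toWord]
    congr 1
    rw [List.replicate_succ', List.flatten_append]
    simp

theorem norm_pow_of_cyclRed {d : FreeGroup α} (hd : CyclRed d) (N : ℕ) :
    FreeGroup.norm (d ^ N) = N * d.toWord.length := by
  rw [pow_eq_mk, norm_mk_eq]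
  · simp [List.length_flatten, mul_comm]
  · have := reduced_append_flatten hd N
    cases N with
    | zero => simp [Reduced, List.Chain']
    | succ N => exact (List.isChain_append.1 this).2.1

theorem exists_cyclRed : ∀ (N : ℕ) (x : FreeGroup α), FreeGroup.norm x ≤ N → x ≠ 1 →
    ∃ a d, x = a * d * a⁻¹ ∧ d ≠ 1 ∧ CyclRed d := by
  intro N
  induction N using Nat.strong_induction_on with
  | _ N ih =>
    intro x hN hx
    by_cases hcr : CyclRed x
    · exact ⟨1, x, by group, hx, hcr⟩
    · set L := x.toWord with hLdef
      have hLr : Reduced L := toWord_reduced x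
      have hLne : L ≠ [] := fun h => hx (FreeGroup.toWord_eq_nil_iff.1 (hLdef ▸ h))
      have hfail : ¬ (∀ z ∈ L.getLast?, ∀ w ∈ L.head?, ¬(z.1 = w.1 ∧ z.2 = !w.2)) := by
        intro hj
        exact hcr (List.isChain_append.2 ⟨hLr, hLr, hj⟩)
      push_neg at hfail
      obtain ⟨z, hz, w, hw, h1, h2⟩ := hfail
      obtain ⟨P, hP⟩ := List.getLast?_eq_some_iff.1 hz
      rcases P with _ | ⟨w', M⟩
      · -- L = [z], so w = z, contradiction
        rw [hP] at hw
        simp only [List.nil_append, List.head?_cons, Option.mem_some_iff] at hw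
        subst hw
        simp at h2
      · -- L = w' :: M ++ [z], and w' = w
        rw [hP] at hw
        simp only [List.cons_append, List.head?_cons, Option.mem_some_iff] at hw
        subst hw
        have hzval : z = (w'.1, !w'.2) := Prod.ext h1 h2
        have hinv : FreeGroup.mk [z] = (FreeGroup.mk [w'])⁻¹ := by
          rw [FreeGroup.inv_mk]
          congr 1
          simp [FreeGroup.invRev, hzval]
        have hxeq : x = FreeGroup.mk [w'] * FreeGroup.mk M * (FreeGroup.mk [w'])⁻¹ := by
          rw [← hinv, FreeGroup.mul_mk, FreeGroup.mul_mk, ← FreeGroup.mk_toWord (x := x),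
            ← hLdef, hP]
          simp
        have hMne : FreeGroup.mk M ≠ 1 := by
          intro h
          apply hx
          rw [hxeq, h, mul_one, mul_inv_cancel]
        have hnormM : FreeGroup.norm (FreeGroup.mk M) < N := by
          calc FreeGroup.norm (FreeGroup.mk M) ≤ M.length := FreeGroup.norm_mk_le
          _ < L.length := by rw [hP]; simp
          _ ≤ N := by
              have : FreeGroup.norm x = L.length := rfl
              omega
        obtain ⟨a, d, had, hd1, hdc⟩ :=
          ih (FreeGroup.norm (FreeGroup.mk M)) hnormM (FreeGroup.mk M) le_rfl hMne
        refine ⟨FreeGroup.mk [w'] * a, d, ?_, hd1, hdc⟩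
        rw [hxeq, had]
        group

theorem exists_cyclRed' (x : FreeGroup α) (hx : x ≠ 1) :
    ∃ a d, x = a * d * a⁻¹ ∧ d ≠ 1 ∧ CyclRed d :=
  exists_cyclRed (FreeGroup.norm x) x le_rfl hx

theorem pow_ne_one {x : FreeGroup α} (hx : x ≠ 1) {N : ℕ} (hN : N ≠ 0) : x ^ N ≠ 1 := by
  obtain ⟨a, d, rfl, hd, hcr⟩ := exists_cyclRed' x hx
  intro h
  have hdN : d ^ N = 1 := by
    have : a * d ^ N * a⁻¹ = 1 := by rw [← conj_pow]; exact h
    have := congrArg (fun y => a⁻¹ * y * a) this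
    simpa [mul_assoc] using this
  have := norm_pow_of_cyclRed hcr N
  rw [hdN] at this
  simp only [FreeGroup.norm_one] at this
  have hlen : d.toWord.length ≠ 0 := by
    simp only [ne_eq, List.length_eq_zero_iff, FreeGroup.toWord_eq_nil_iff]
    exact hd
  rcases Nat.mul_eq_zero.1 this.symm with h' | h'
  · exact hN h'
  · exact hlen h'

theorem zpow_ne_one {x : FreeGroup α} (hx : x ≠ 1) {k : ℤ} (hk : k ≠ 0) : x ^ k ≠ 1 := by
  intro h
  apply pow_ne_one hx (Int.natAbs_ne_zero.2 hk)
  have : x ^ (k.natAbs : ℤ) = 1 := by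
    rcases Int.natAbs_eq k with h' | h'
    · rw [← h', h]
    · rw [← neg_neg (k.natAbs : ℤ), ← h', zpow_neg, h, inv_one]
  rwa [zpow_natCast] at this

theorem zpow_left_inj {x : FreeGroup α} (hx : x ≠ 1) {s t : ℤ} (h : x ^ s = x ^ t) : s = t := by
  by_contra hne
  exact zpow_ne_one hx (sub_ne_zero.2 hne) (by rw [zpow_sub, h, mul_inv_cancel])




/-- If `w` commutes with `of b` then `w` is a power of `of b`. -/
theorem mem_zpowers_of_commute_of (b : α) :
    ∀ (N : ℕ) (w : FreeGroup α), FreeGroup.norm w ≤ N →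
      w * of b = of b * w → w ∈ Subgroup.zpowers (of b) := by
  intro N
  induction N using Nat.strong_induction_on with
  | _ N ih =>
    intro w hN hcomm
    set L := w.toWord with hLdef
    rcases hL : L with _ | _
    · have : w = 1 := FreeGroup.toWord_eq_nil_iff.1 (hLdef ▸ hL)
      rw [this]; exact one_mem _
    · have hLne : L ≠ [] := by rw [hL]; simp
      set z := L.getLast hLne with hzdef
      have hsplit : L.dropLast ++ [z] = L := List.dropLast_append_getLast hLne
      have hLr : Reduced L := toWord_reduced w
      have hw_mk : w = mk L := (FreeGroup.mk_toWord).symm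
      have hweq : w = mk L.dropLast * mk [z] := by
        rw [FreeGroup.mul_mk, hsplit]; exact hw_mk
      by_cases hb : z.1 = b
      · -- strip the last letter
        set ε : ℤ := if z.2 then 1 else -1 with hε
        have hz : mk [z] = of b ^ ε := by
          rcases hz2 : z.2 with _ | _
          · have : z = (b, false) := Prod.ext hb hz2
            rw [this, hε, hz2, if_neg (by simp)]
            rw [show ((-1 : ℤ)) = -(1:ℤ) from rfl, zpow_neg, zpow_one]
            rw [show (of b)⁻¹ = mk (invRev [(b, true)]) from FreeGroup.inv_mk]
            simp [FreeGroup.invRev]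
          · have : z = (b, true) := Prod.ext hb hz2
            rw [this, hε, hz2, if_pos rfl, zpow_one]
            rfl
        set w' := mk L.dropLast with hw'
        have hwe : w = w' * of b ^ ε := by rw [hweq, hz]
        have hcomm' : w' * of b = of b * w' := by
          have h1 : w' = w * of b ^ (-ε) := by rw [hwe]; group
          rw [h1]
          have h2 : of b * (w * of b ^ (-ε)) = (of b * w) * of b ^ (-ε) := by group
          rw [h2, ← hcomm]
          group
        have hnorm' : FreeGroup.norm w' < N := by
          calc FreeGroup.norm w' ≤ L.dropLast.length := FreeGroup.norm_mk_le
          _ < L.length := by rw [hL]; simp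
          _ ≤ N := by have : FreeGroup.norm w = L.length := rfl; omega
        have := ih _ hnorm' w' le_rfl hcomm'
        rw [hwe]
        exact mul_mem this (zpow_mem (Subgroup.mem_zpowers _) ε)
      · -- last letter not b: the conjugate is reduced, contradiction unless L = []
        exfalso
        have hconj : w * of b * w⁻¹ = of b := by
          rw [hcomm]; group
        have hlist : w * of b * w⁻¹ = mk (L ++ [(b, true)] ++ invRev L) := by
          rw [hw_mk, FreeGroup.inv_mk]
          rw [show of b = mk [(b, true)] from rfl]
          rw [FreeGroup.mul_mk, FreeGroup.mul_mk]
        have hred : Reduced (L ++ [(b, true)] ++ invRev L) := by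
          have hrL : Reduced L := hLr
          have hrInv : Reduced (invRev L) := by
            have : invRev L = w⁻¹.toWord := by rw [FreeGroup.toWord_inv, ← hLdef]
            rw [this]; exact toWord_reduced _
          rw [Reduced]; unfold List.Chain'; rw [List.append_assoc, List.isChain_append]
          refine ⟨hrL, ?_, ?_⟩
          · rw [List.isChain_append]
            refine ⟨List.isChain_singleton _, hrInv, ?_⟩
            intro x hx y hy
            simp only [List.getLast?_singleton, Option.mem_some_iff] at hx
            subst hx
            -- y is head of invRev L, i.e. inverse of last of L
            have hyval : y = (z.1, !z.2) := by
              have h1 : (invRev L).head? = some (z.1, !z.2) := by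
                rw [FreeGroup.invRev, List.head?_reverse, List.getLast?_map,
                  List.getLast?_eq_getLast_of_ne_nil hLne]
                rfl
              rw [h1] at hy
              simp at hy
              exact hy.symm
            rw [hyval]
            rintro ⟨hh, -⟩
            exact hb (by rw [← hh])
          · intro x hx y hy
            have hxz : x = z := by
              rw [List.getLast?_eq_getLast_of_ne_nil hLne] at hx
              simp at hx
              exact hx.symm
            subst hxz
            have hyb : y = (b, true) := by
              simp only [List.cons_append, List.head?_cons, Option.mem_some_iff] at hy
              exact hy.symm
            subst hyb
            rintro ⟨hh, -⟩
            exact hb hh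
        have : FreeGroup.norm (w * of b * w⁻¹) = 2 * L.length + 1 := by
          rw [hlist, norm_mk_eq hred]
          simp [FreeGroup.invRev]
          omega
        rw [hconj] at this
        have : (1 : ℕ) = 2 * L.length + 1 := by
          rw [← this]; exact (FreeGroup.norm_of b).symm
        have : L.length = 0 := by omega
        rw [hL] at this
        simp at this



/-- powers of distinct generators intersect trivially -/
theorem eq_one_of_mem_zpowers_of {β : Type*} {b₁ b₂ : β} (hne : b₁ ≠ b₂) {x : FreeGroup β}
    (h1 : x ∈ Subgroup.zpowers (of b₁)) (h2 : x ∈ Subgroup.zpowers (of b₂)) : x = 1 := by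
  classical
  obtain ⟨s, rfl⟩ := h1
  obtain ⟨t, ht⟩ := h2
  set φ : FreeGroup β →* Multiplicative ℤ :=
    FreeGroup.lift (fun a => if a = b₁ then Multiplicative.ofAdd (1 : ℤ) else 1) with hφ
  have hb1 : φ (of b₁) = Multiplicative.ofAdd (1 : ℤ) := by simp [hφ]
  have hb2 : φ (of b₂) = 1 := by simp [hφ, hne.symm]
  have : φ ((of b₁) ^ s) = Multiplicative.ofAdd s := by
    rw [map_zpow, hb1, ← ofAdd_zsmul]
    simp
  have h0 : φ ((of b₁) ^ s) = 1 := by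
    have : φ ((of b₂) ^ t) = 1 := by rw [map_zpow, hb2, one_zpow]
    rw [← this]
    exact congrArg φ ht.symm
  rw [this] at h0
  have : s = 0 := by
    have := congrArg Multiplicative.toAdd h0
    simpa using this
  show of b₁ ^ s = 1
  rw [this, zpow_zero]

/-- Centralizers of nontrivial elements of free groups are cyclic. -/
theorem centralizer_cyclic {α : Type*} [DecidableEq α] (d : FreeGroup α) (hd : d ≠ 1) :
    ∃ z : FreeGroup α, Subgroup.centralizer {d} = Subgroup.zpowers z := by
  classical
  set C := Subgroup.centralizer {d} with hC
  have hdC : d ∈ C := Subgroup.mem_centralizer_iff.2 (by rintro h rfl; rfl)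
  letI : IsFreeGroup C := inferInstance
  set β := IsFreeGroup.Generators C with hβ
  set e : C ≃* FreeGroup β := IsFreeGroup.toFreeGroup C with he
  set dd : FreeGroup β := e ⟨d, hdC⟩ with hdd
  have hddne : dd ≠ 1 := by
    intro h
    apply hd
    have : (⟨d, hdC⟩ : C) = 1 := by
      apply e.injective
      rw [← hdd, h]
      exact (_root_.map_one e).symm
    exact Subtype.ext_iff.1 this
  -- dd is central
  have hcentral : ∀ v : FreeGroup β, v * dd = dd * v := by
    intro v
    have h1 : ∀ u : C, u * (⟨d, hdC⟩ : C) = (⟨d, hdC⟩ : C) * u := by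
      intro u
      ext
      exact (Subgroup.mem_centralizer_iff.1 u.2 d rfl).symm
    have := congrArg e (h1 (e.symm v))
    simpa using this
  -- β is a subsingleton
  have hss : ∀ b₁ b₂ : β, b₁ = b₂ := by
    intro b₁ b₂
    by_contra hne
    apply hddne
    refine eq_one_of_mem_zpowers_of hne ?_ ?_
    · exact mem_zpowers_of_commute_of b₁ (FreeGroup.norm dd) dd le_rfl (hcentral _).symm
    · exact mem_zpowers_of_commute_of b₂ (FreeGroup.norm dd) dd le_rfl (hcentral _).symm
  -- get a generator
  have hwne : dd.toWord ≠ [] := fun h => hddne (FreeGroup.toWord_eq_nil_iff.1 h)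
  set b₀ : β := (dd.toWord.head hwne).1 with hb₀
  have hall : ∀ v : FreeGroup β, v ∈ Subgroup.zpowers (of b₀) := by
    intro v
    induction v using FreeGroup.induction_on with
    | C1 => exact one_mem _
    | of x => rw [hss x b₀]; exact Subgroup.mem_zpowers _
    | inv_of x hx => exact inv_mem hx
    | mul x y hx hy => exact mul_mem hx hy
  refine ⟨(e.symm (of b₀) : C), ?_⟩
  apply _root_.le_antisymm
  · intro u hu
    obtain ⟨k, hk⟩ := hall (e ⟨u, hu⟩)
    have : (⟨u, hu⟩ : C) = (e.symm (of b₀)) ^ k := by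
      apply e.injective
      rw [map_zpow]
      simp [← hk]
    refine ⟨k, ?_⟩
    show ((e.symm (of b₀) : C) : FreeGroup α) ^ k = u
    rw [← Subgroup.coe_zpow, ← this]
  · rw [Subgroup.zpowers_le]
    exact (e.symm (of b₀)).2



theorem cent_eq_zpowers (c : FreeGroup α) (hc : c ≠ 1)
    (hnp : ∀ (x : FreeGroup α) (k : ℕ), c = x ^ k → k = 1)
    (d : FreeGroup α) (hd : d ≠ 1) (hcd : c * d = d * c) :
    Subgroup.centralizer {d} = Subgroup.zpowers c := by
  obtain ⟨z, hz⟩ := centralizer_cyclic d hd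
  have hcmem : c ∈ Subgroup.centralizer {d} :=
    Subgroup.mem_centralizer_iff.2 (by
      intro x hx; rw [Set.mem_singleton_iff] at hx; rw [hx]; exact hcd.symm)
  rw [hz] at hcmem
  obtain ⟨k, hk⟩ := hcmem
  have hk : z ^ k = c := hk
  have hk0 : k ≠ 0 := by
    rintro rfl
    exact hc (by rw [← hk, zpow_zero])
  rcases lt_or_gt_of_ne hk0 with hneg | hpos
  · have hck : c = z⁻¹ ^ (-k).toNat := by
      rw [← zpow_natCast, Int.toNat_of_nonneg (by omega), inv_zpow, ← zpow_neg, neg_neg, hk]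
    have := hnp z⁻¹ (-k).toNat hck
    have hk1 : k = -1 := by omega
    rw [hz]
    rw [hk1] at hk
    have : c = z⁻¹ := by rw [← hk]; simp
    rw [this, Subgroup.zpowers_inv]
  · have hck : c = z ^ k.toNat := by
      rw [← zpow_natCast, Int.toNat_of_nonneg (by omega), hk]
    have := hnp z k.toNat hck
    have hk1 : k = 1 := by omega
    rw [hk1, zpow_one] at hk
    rw [hz, hk]

theorem main (c : FreeGroup α) (hc : c ≠ 1)
    (hnp : ∀ (x : FreeGroup α) (k : ℕ), c = x ^ k → k = 1) :
    ∀ (g : FreeGroup α) (m n : ℤ), m ≠ 0 → n ≠ 0 → g * c ^ m * g⁻¹ = c ^ n →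
      g ∈ Subgroup.zpowers c ∧ m = n := by
  intro g m n hm hn heq
  have hcent := cent_eq_zpowers c hc hnp
  have hcnne : c ^ n ≠ 1 := zpow_ne_one hc hn
  have hu : (g * c * g⁻¹) ^ m = c ^ n := by rw [conj_zpow, heq]
  have humem : g * c * g⁻¹ ∈ Subgroup.centralizer {c ^ n} := by
    refine Subgroup.mem_centralizer_iff.2 ?_
    intro x hx; rw [Set.mem_singleton_iff] at hx; rw [hx]
    rw [← hu]
    exact ((Commute.refl (g * c * g⁻¹)).zpow_right m).eq.symm
  rw [hcent (c ^ n) hcnne ((Commute.refl c).zpow_right n).eq] at humem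
  obtain ⟨t, ht⟩ := humem
  have ht : c ^ t = g * c * g⁻¹ := ht
  have hn_eq : n = t * m := by
    apply zpow_left_inj hc
    rw [← hu, ← ht, ← zpow_mul, mul_comm]
  have hccent : Subgroup.centralizer {c} = Subgroup.zpowers c :=
    hcent c hc rfl
  have hv : (g⁻¹ * c * g) ^ t = c := by
    have : (g⁻¹ * c * g⁻¹⁻¹) ^ t = g⁻¹ * c ^ t * g⁻¹⁻¹ := conj_zpow
    rw [inv_inv] at this
    rw [this, ht]
    group
  have hvmem : g⁻¹ * c * g ∈ Subgroup.centralizer {c} := by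
    have hcomm : (g⁻¹ * c * g) * c = c * (g⁻¹ * c * g) := by
      have h' := ((Commute.refl (g⁻¹ * c * g)).zpow_right t).eq
      rw [hv] at h'
      exact h'
    refine Subgroup.mem_centralizer_iff.2 ?_
    intro x hx; rw [Set.mem_singleton_iff] at hx; rw [hx]
    exact hcomm.symm
  rw [hccent] at hvmem
  obtain ⟨s, hs⟩ := hvmem
  have hs : c ^ s = g⁻¹ * c * g := hs
  have hst : s * t = 1 := by
    apply zpow_left_inj hc (t := 1)
    rw [zpow_mul, hs, hv, zpow_one]
  rcases Int.mul_eq_one_iff_eq_one_or_neg_one.1 hst with ⟨-, ht1⟩ | ⟨-, ht1⟩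
  · -- t = 1
    subst ht1
    rw [zpow_one] at ht
    constructor
    · have : g ∈ Subgroup.centralizer {c} := by
        refine Subgroup.mem_centralizer_iff.2 ?_
        intro x hx; rw [Set.mem_singleton_iff] at hx; rw [hx]
        have := congrArg (fun y => y * g) ht
        simpa [mul_assoc] using this
      rwa [hccent] at this
    · omega
  · -- t = -1 : contradiction
    exfalso
    subst ht1
    have htc : g * c * g⁻¹ = c⁻¹ := by rw [← ht, zpow_neg, zpow_one]
    have h2 : (g * g) * c * (g * g)⁻¹ = c := by
      have e1 : (g * g) * c * (g * g)⁻¹ = g * (g * c * g⁻¹) * g⁻¹ := by group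
      rw [e1, htc]
      have e2 : g * c⁻¹ * g⁻¹ = (g * c * g⁻¹)⁻¹ := by group
      rw [e2, htc, inv_inv]
    have hggmem : g * g ∈ Subgroup.centralizer {c} := by
      refine Subgroup.mem_centralizer_iff.2 ?_
      intro x hx; rw [Set.mem_singleton_iff] at hx; rw [hx]
      have := congrArg (fun y => y * (g * g)) h2
      simpa [mul_assoc] using this.symm
    rw [hccent] at hggmem
    obtain ⟨j, hj⟩ := hggmem
    have hj : c ^ j = g * g := hj
    have hconj_j : g * c ^ j * g⁻¹ = c ^ (-j) := by
      rw [← conj_zpow, htc, inv_zpow, ← zpow_neg]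
    have hfix_j : g * c ^ j * g⁻¹ = c ^ j := by
      rw [hj]
      group
    have hj0 : j = 0 := by
      have := zpow_left_inj hc (hconj_j.symm.trans hfix_j)
      omega
    rw [hj0, zpow_zero] at hj
    have hg1 : g = 1 := by
      by_contra hg
      exact pow_ne_one hg (two_ne_zero) (by rw [pow_two]; exact hj.symm)
    rw [hg1] at htc
    simp only [one_mul, inv_one, mul_one] at htc
    have : c ^ (1 : ℤ) = c ^ (-1 : ℤ) := by
      rw [zpow_one, zpow_neg, zpow_one]
      exact htc
    have := zpow_left_inj hc this
    omega

end Mal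

theorem stmt13 {α : Type*} (c : FreeGroup α) (hc : c ≠ 1)
    (hnp : ∀ (x : FreeGroup α) (k : ℕ), c = x ^ k → k = 1) :
    ∀ (g : FreeGroup α) (m n : ℤ), m ≠ 0 → n ≠ 0 → g * c ^ m * g⁻¹ = c ^ n →
      g ∈ Subgroup.zpowers c ∧ m = n := by
  letI := Classical.decEq α
  exact Mal.main c hc hnp
end

section
/- GL₂(ℤ) does not have the congruence subgroup property with respect to ℤ²: there exists a finite-index subgroup of GL₂(ℤ) ≅ Out(ℤ²) that does not contain the kernel of the reduction map GL₂(ℤ) → GL₂(ℤ/nℤ) for any n ≥ 1, given the existence of non-conjugate matrices A, B ∈ GL₂(ℤ) whose reductions mod n are conjugate for every n, together with conjugacy separability of GL₂(ℤ). -/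
/-- The reduction map `GL₂(ℤ) → GL₂(ℤ/nℤ)`. -/
noncomputable def redGL (n : ℕ) :
    Matrix.GeneralLinearGroup (Fin 2) ℤ →* Matrix.GeneralLinearGroup (Fin 2) (ZMod n) :=
  Matrix.GeneralLinearGroup.map (Int.castRingHom (ZMod n))

namespace NC



/-- Descent: `x² + x y - 57 y²` (the norm form of `ℤ[(1+√229)/2]`) never takes
the values `3` or `-3`, since the prime `3` splits into non-principal ideals
(class number of disc 229 is 3). -/
lemma descent : ∀ (y : ℕ), ∀ x e : ℤ, (e = 3 ∨ e = -3) →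
    x * x + x * (y : ℤ) - 57 * ((y : ℤ) * (y : ℤ)) = e → False := by
  intro y
  induction y using Nat.strong_induction_on with
  | _ y IH =>
    intro x e he hx
    rcases Nat.eq_zero_or_pos y with hy0 | hy1
    · subst hy0
      norm_num at hx
      rcases he with rfl | rfl
      · rcases (by omega : 2 ≤ x ∨ x ≤ -2 ∨ (-1 ≤ x ∧ x ≤ 1)) with h | h | h
        · nlinarith [mul_le_mul h h (by norm_num : (0:ℤ) ≤ 2) (by omega : (0:ℤ) ≤ x)]
        · nlinarith [mul_le_mul (by omega : (2:ℤ) ≤ -x) (by omega : (2:ℤ) ≤ -x)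
            (by norm_num : (0:ℤ) ≤ 2) (by omega : (0:ℤ) ≤ -x)]
        · nlinarith [mul_nonneg (by omega : (0:ℤ) ≤ 1 - x) (by omega : (0:ℤ) ≤ 1 + x)]
      · nlinarith [mul_self_nonneg x]
    · have hY : 1 ≤ (y : ℤ) := by exact_mod_cast hy1
      have hYsq : 1 ≤ (y:ℤ) * (y:ℤ) := by nlinarith
      have he3 : -3 ≤ e ∧ e ≤ 3 := by rcases he with rfl | rfl <;> norm_num
      have hrange : x < -7 * (y:ℤ) ∨ 6 * (y:ℤ) < x := by
        by_contra hcon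
        push_neg at hcon
        obtain ⟨h1, h2⟩ := hcon
        nlinarith [mul_nonneg (by linarith : (0:ℤ) ≤ 6 * (y:ℤ) - x)
          (by linarith : (0:ℤ) ≤ x + 7 * (y:ℤ))]
      obtain ⟨x₁, hx₁range, hx₁⟩ :
          ∃ x₁ : ℤ, 6 * (y:ℤ) < x₁ ∧ x₁ * x₁ + x₁ * (y:ℤ) - 57 * ((y:ℤ) * (y:ℤ)) = e := by
        rcases hrange with h | h
        · exact ⟨-x - (y:ℤ), by linarith, by linear_combination hx⟩
        · exact ⟨x, h, hx⟩
      have hx₁pos : 0 < x₁ := by linarith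
      have hub : x₁ < 8 * (y:ℤ) := by
        by_contra hcon
        push_neg at hcon
        nlinarith [mul_le_mul hcon hcon (by linarith : (0:ℤ) ≤ 8 * (y:ℤ)) (by linarith : (0:ℤ) ≤ x₁),
          mul_le_mul hcon (le_refl (y:ℤ)) (by linarith : (0:ℤ) ≤ (y:ℤ)) (by linarith : (0:ℤ) ≤ x₁)]
      have hy₂lt : (7 * (y:ℤ) - x₁).natAbs < y := by omega
      have he' : -e = 3 ∨ -e = -3 := by rcases he with rfl | rfl <;> norm_num
      rcases le_or_gt 0 (7 * (y:ℤ) - x₁) with hsgn | hsgn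
      · refine IH _ hy₂lt (8 * x₁ - 57 * (y:ℤ)) (-e) he' ?_
        have habs : (((7 * (y:ℤ) - x₁).natAbs : ℤ)) = 7 * (y:ℤ) - x₁ := Int.natAbs_of_nonneg hsgn
        rw [habs]
        linear_combination -hx₁
      · refine IH _ hy₂lt (-(8 * x₁ - 57 * (y:ℤ))) (-e) he' ?_
        have habs : (((7 * (y:ℤ) - x₁).natAbs : ℤ)) = -(7 * (y:ℤ) - x₁) := by omega
        rw [habs]
        linear_combination -hx₁

/-- The conjugating form `3a² + ac - 19c²` never takes the values `±1`. -/
lemma form_ne_pm_one (a c : ℤ) (h : 3*a*a + a*c - 19*(c*c) = 1 ∨ 3*a*a + a*c - 19*(c*c) = -1) :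
    False := by
  rcases le_or_gt 0 c with hc | hc
  · have habs : ((c.natAbs : ℤ)) = c := Int.natAbs_of_nonneg hc
    rcases h with h | h
    · exact descent c.natAbs (3*a) 3 (Or.inl rfl) (by rw [habs]; linear_combination 3*h)
    · exact descent c.natAbs (3*a) (-3) (Or.inr rfl) (by rw [habs]; linear_combination 3*h)
  · have habs : ((c.natAbs : ℤ)) = -c := by omega
    rcases h with h | h
    · exact descent c.natAbs (-(3*a)) 3 (Or.inl rfl) (by rw [habs]; linear_combination 3*h)
    · exact descent c.natAbs (-(3*a)) (-3) (Or.inr rfl) (by rw [habs]; linear_combination 3*h)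




lemma exists_entries (n : ℕ) (hn : 1 ≤ n) :
    ∃ P Q R W : ℤ, P * W - Q * R = 1 ∧
      (n:ℤ) ∣ Q - 19 * R ∧ (n:ℤ) ∣ 57 * P + Q - 19 * W ∧
      (n:ℤ) ∣ W - R - 3 * P ∧ (n:ℤ) ∣ 57 * R - 3 * Q := by
  have hn0 : n ≠ 0 := by omega
  have hco5 : Nat.Coprime 5 (ordCompl[5] n) := Nat.coprime_ordCompl (by norm_num) hn0
  have hABn : ordProj[5] n * ordCompl[5] n = n := Nat.ordProj_mul_ordCompl_eq_self n 5
  set A : ℕ := ordProj[5] n with hA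
  set B : ℕ := ordCompl[5] n with hB
  have hA1 : 1 ≤ A := Nat.one_le_iff_ne_zero.mpr (pow_ne_zero _ (by norm_num))
  have hB1 : 1 ≤ B := Nat.one_le_iff_ne_zero.mpr (by
    intro h0
    rw [h0, mul_zero] at hABn
    exact hn0 hABn.symm)
  have hcoAB : Nat.Coprime A B := Nat.Coprime.pow_left _ hco5
  obtain ⟨a', ha'A, ha'B⟩ := Nat.chineseRemainder hcoAB (7 * (A - 1)) (4 * (B - 1))
  obtain ⟨s', hs'A, hs'B⟩ := Nat.chineseRemainder hcoAB 11 5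
  set a : ℤ := (a' : ℤ) with ha
  set s : ℤ := (s' : ℤ) with hs
  -- integer congruences for the CRT values
  have haA : a ≡ -7 [ZMOD (A:ℤ)] := by
    refine (Int.natCast_modEq_iff.mpr ha'A).trans ?_
    have h7 : ((7 * (A - 1) : ℕ) : ℤ) = 7 * (A:ℤ) - 7 := by
      push_cast [Nat.cast_sub hA1]; ring
    rw [h7]
    exact Int.modEq_iff_dvd.mpr ⟨-7, by ring⟩
  have haB : a ≡ -4 [ZMOD (B:ℤ)] := by
    refine (Int.natCast_modEq_iff.mpr ha'B).trans ?_
    have h4 : ((4 * (B - 1) : ℕ) : ℤ) = 4 * (B:ℤ) - 4 := by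
      push_cast [Nat.cast_sub hB1]; ring
    rw [h4]
    exact Int.modEq_iff_dvd.mpr ⟨-4, by ring⟩
  have hsA : s ≡ 11 [ZMOD (A:ℤ)] := by
    have := Int.natCast_modEq_iff.mpr hs'A
    simpa using this
  have hsB : s ≡ 5 [ZMOD (B:ℤ)] := by
    have := Int.natCast_modEq_iff.mpr hs'B
    simpa using this
  -- the quadratic form value is a square of a unit mod n
  have hFA : (A:ℤ) ∣ (3*a*a + a - 19) - s*s := by
    have h1 : 3*a*a + a - 19 ≡ 3*(-7)*(-7) + (-7) - 19 [ZMOD (A:ℤ)] :=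
      ((((Int.ModEq.refl 3).mul haA).mul haA).add haA).sub (Int.ModEq.refl 19)
    have h1' : (3*(-7)*(-7) + (-7) - 19 : ℤ) = 11 * 11 := by norm_num
    rw [h1'] at h1
    exact (h1.trans (hsA.mul hsA).symm).symm.dvd
  have hFB : (B:ℤ) ∣ (3*a*a + a - 19) - s*s := by
    have h1 : 3*a*a + a - 19 ≡ 3*(-4)*(-4) + (-4) - 19 [ZMOD (B:ℤ)] :=
      ((((Int.ModEq.refl 3).mul haB).mul haB).add haB).sub (Int.ModEq.refl 19)
    have h1' : (3*(-4)*(-4) + (-4) - 19 : ℤ) = 5 * 5 := by norm_num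
    rw [h1'] at h1
    exact (h1.trans (hsB.mul hsB).symm).symm.dvd
  have hcoAB' : IsCoprime (A:ℤ) (B:ℤ) := Nat.isCoprime_iff_coprime.mpr hcoAB
  have hncast : ((n:ℕ):ℤ) = (A:ℤ) * (B:ℤ) := by rw [← Nat.cast_mul, hABn]
  have hdvdn : (n:ℤ) ∣ (3*a*a + a - 19) - s*s := by
    rw [hncast]; exact hcoAB'.mul_dvd hFA hFB
  -- s is a unit mod n
  have hs11 : IsCoprime (11:ℤ) (A:ℤ) := by
    have h1 : Nat.Coprime 11 A := by
      rw [hA]; exact Nat.Coprime.pow_right _ (by norm_num)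
    exact_mod_cast Nat.isCoprime_iff_coprime.mpr h1
  have hs5 : IsCoprime (5:ℤ) (B:ℤ) := by
    exact_mod_cast Nat.isCoprime_iff_coprime.mpr hco5
  obtain ⟨c1, hc1⟩ := hsA.dvd
  have hsA' : IsCoprime s (A:ℤ) := by
    have := hs11.add_mul_left_left (-c1)
    rwa [show (11 + (A:ℤ)*(-c1)) = s by linear_combination hc1] at this
  obtain ⟨c2, hc2⟩ := hsB.dvd
  have hsB' : IsCoprime s (B:ℤ) := by
    have := hs5.add_mul_left_left (-c2)
    rwa [show (5 + (B:ℤ)*(-c2)) = s by linear_combination hc2] at this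
  have hsn : IsCoprime s (n:ℤ) := by
    rw [hncast]; exact hsA'.mul_right hsB'
  obtain ⟨lam, mu, hlm⟩ := hsn
  have hnlam : IsCoprime (n:ℤ) lam := ⟨mu, s, by linear_combination hlm⟩
  obtain ⟨al, be, hab⟩ := id hnlam
  -- the candidate entries
  have hp1 : lam ∣ (lam*a + (n:ℤ)*(al*(1 - lam*a))) - 1 :=
    ⟨be*(lam*a - 1), by linear_combination (1 - lam*a) * hab⟩
  have hw1 : lam ∣ (lam*(3*a+1) + (n:ℤ)*(al*(1 - lam*(3*a+1)))) - 1 :=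
    ⟨be*(lam*(3*a+1) - 1), by linear_combination (1 - lam*(3*a+1)) * hab⟩
  have e1 : (lam*a + (n:ℤ)*(al*(1 - lam*a))) ≡ lam*a [ZMOD (n:ℤ)] :=
    Int.modEq_iff_dvd.mpr ⟨-(al*(1 - lam*a)), by ring⟩
  have e2 : (lam*(3*a+1) + (n:ℤ)*(al*(1 - lam*(3*a+1)))) ≡ lam*(3*a+1) [ZMOD (n:ℤ)] :=
    Int.modEq_iff_dvd.mpr ⟨-(al*(1 - lam*(3*a+1))), by ring⟩
  have e3 : (3*a*a + a - 19) ≡ s*s [ZMOD (n:ℤ)] := by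
    obtain ⟨E, hE⟩ := hdvdn
    exact Int.modEq_iff_dvd.mpr ⟨-E, by linear_combination -hE⟩
  have e4 : lam * s ≡ 1 [ZMOD (n:ℤ)] := Int.modEq_iff_dvd.mpr ⟨mu, by linear_combination -hlm⟩
  have echain :
      (lam*a + (n:ℤ)*(al*(1 - lam*a))) * (lam*(3*a+1) + (n:ℤ)*(al*(1 - lam*(3*a+1))))
        - 19*lam*lam - 1 ≡ 0 [ZMOD (n:ℤ)] := by
    calc (lam*a + (n:ℤ)*(al*(1 - lam*a))) * (lam*(3*a+1) + (n:ℤ)*(al*(1 - lam*(3*a+1))))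
          - 19*lam*lam - 1
        ≡ (lam*a) * (lam*(3*a+1)) - 19*lam*lam - 1 [ZMOD (n:ℤ)] :=
          ((e1.mul e2).sub (Int.ModEq.refl (19*lam*lam))).sub (Int.ModEq.refl 1)
      _ = lam*lam*(3*a*a + a - 19) - 1 := by ring
      _ ≡ lam*lam*(s*s) - 1 [ZMOD (n:ℤ)] :=
          ((Int.ModEq.refl (lam*lam)).mul e3).sub (Int.ModEq.refl 1)
      _ = (lam*s)*(lam*s) - 1 := by ring
      _ ≡ 1*1 - 1 [ZMOD (n:ℤ)] := (e4.mul e4).sub (Int.ModEq.refl 1)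
      _ = 0 := by norm_num
  have hDn : (n:ℤ) ∣ (lam*a + (n:ℤ)*(al*(1 - lam*a))) * (lam*(3*a+1) + (n:ℤ)*(al*(1 - lam*(3*a+1))))
      - 19*lam*lam - 1 := by
    have h := echain.dvd
    rwa [zero_sub, dvd_neg] at h
  have hDlam : lam ∣ (lam*a + (n:ℤ)*(al*(1 - lam*a))) * (lam*(3*a+1) + (n:ℤ)*(al*(1 - lam*(3*a+1))))
      - 19*lam*lam - 1 := by
    obtain ⟨d1, hd1⟩ := hp1
    obtain ⟨d2, hd2⟩ := hw1
    exact ⟨d1*(lam*(3*a+1) + (n:ℤ)*(al*(1 - lam*(3*a+1)))) + d2 - 19*lam,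
      by linear_combination (lam*(3*a+1) + (n:ℤ)*(al*(1 - lam*(3*a+1)))) * hd1 + hd2⟩
  obtain ⟨v, hv⟩ := hnlam.mul_dvd hDn hDlam
  exact ⟨lam*a + (n:ℤ)*(al*(1 - lam*a)), 19*lam + (n:ℤ)*v, lam,
    lam*(3*a+1) + (n:ℤ)*(al*(1 - lam*(3*a+1))),
    by linear_combination hv,
    ⟨v, by ring⟩,
    ⟨57*(al*(1 - lam*a)) + v - 19*(al*(1 - lam*(3*a+1))), by ring⟩,
    ⟨al*(1 - lam*(3*a+1)) - 3*(al*(1 - lam*a)), by ring⟩,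
    ⟨-3*v, by ring⟩⟩


/-- `A₀`: the fundamental unit `(15+√229)/2` acting on `ℤ[(1+√229)/2]`. -/
def AU : Matrix.GeneralLinearGroup (Fin 2) ℤ :=
  ⟨!![7, 57; 1, 8], !![-8, 57; 1, -7], by
    ext i j
    fin_cases i <;> fin_cases j <;>
      simp [Matrix.mul_apply, Fin.sum_univ_two], by
    ext i j
    fin_cases i <;> fin_cases j <;>
      simp [Matrix.mul_apply, Fin.sum_univ_two]⟩

/-- `B₀`: the same unit acting on the non-principal ideal `(3, (1+√229)/2)`. -/
def BU : Matrix.GeneralLinearGroup (Fin 2) ℤ :=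
  ⟨!![7, 19; 3, 8], !![-8, 19; 3, -7], by
    ext i j
    fin_cases i <;> fin_cases j <;>
      simp [Matrix.mul_apply, Fin.sum_univ_two], by
    ext i j
    fin_cases i <;> fin_cases j <;>
      simp [Matrix.mul_apply, Fin.sum_univ_two]⟩


lemma not_conj : ¬ IsConj AU BU := by
  intro h
  obtain ⟨u, hu⟩ := isConj_iff.mp h
  have h2 : u * AU = BU * u := by
    rw [← hu]; group
  have h3 : (u : Matrix (Fin 2) (Fin 2) ℤ) * !![7, 57; 1, 8]
      = !![7, 19; 3, 8] * (u : Matrix (Fin 2) (Fin 2) ℤ) := by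
    have := congrArg Units.val h2
    simpa [AU, BU] using this
  have e00 := congrFun (congrFun h3 0) 0
  have e10 := congrFun (congrFun h3 1) 0
  simp [Matrix.mul_apply, Fin.sum_univ_two] at e00 e10
  have hdu : IsUnit (u : Matrix (Fin 2) (Fin 2) ℤ).det :=
    (Matrix.isUnit_iff_isUnit_det _).mp u.isUnit
  rw [Int.isUnit_iff, Matrix.det_fin_two] at hdu
  set p := (u : Matrix (Fin 2) (Fin 2) ℤ) 0 0
  set q := (u : Matrix (Fin 2) (Fin 2) ℤ) 0 1
  set r := (u : Matrix (Fin 2) (Fin 2) ℤ) 1 0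
  set w := (u : Matrix (Fin 2) (Fin 2) ℤ) 1 1
  apply form_ne_pm_one p r
  rcases hdu with hd | hd
  · left; linear_combination hd - p * e10 + r * e00
  · right; linear_combination hd - p * e10 + r * e00


lemma zmod_cast_eq {n : ℕ} (x y : ℤ) (h : (n:ℤ) ∣ x - y) : ((x : ZMod n)) = ((y : ZMod n)) := by
  obtain ⟨t, ht⟩ := h
  exact (ZMod.intCast_eq_intCast_iff _ _ _).mpr (Int.modEq_iff_dvd.mpr ⟨-t, by linear_combination -ht⟩)

lemma conj_mod (n : ℕ) (hn : 1 ≤ n) :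
    ∃ g : Matrix.GeneralLinearGroup (Fin 2) ℤ, redGL n (g * AU * g⁻¹) = redGL n BU := by
  obtain ⟨P, Q, R, W, hdet, h1, h2, h3, h4⟩ := exists_entries n hn
  refine ⟨⟨!![P, Q; R, W], !![W, -Q; -R, P], ?_, ?_⟩, ?_⟩
  · ext i j
    fin_cases i <;> fin_cases j <;>
      simp [Matrix.mul_apply, Fin.sum_univ_two] <;> first | linear_combination hdet | ring
  · ext i j
    fin_cases i <;> fin_cases j <;>
      simp [Matrix.mul_apply, Fin.sum_univ_two] <;> first | linear_combination hdet | ring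
  · set g : Matrix.GeneralLinearGroup (Fin 2) ℤ :=
      ⟨!![P, Q; R, W], !![W, -Q; -R, P], by
        ext i j
        fin_cases i <;> fin_cases j <;>
          simp [Matrix.mul_apply, Fin.sum_univ_two] <;> first | linear_combination hdet | ring, by
        ext i j
        fin_cases i <;> fin_cases j <;>
          simp [Matrix.mul_apply, Fin.sum_univ_two] <;> first | linear_combination hdet | ring⟩
      with hgdef
    have hz1 : ((Q : ℤ) : ZMod n) = ((19*R : ℤ) : ZMod n) := zmod_cast_eq _ _ (by
      have := h1; rwa [show Q - 19*R = Q - 19*R by ring] at this)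
    have hz2 : ((57*P + Q : ℤ) : ZMod n) = ((19*W : ℤ) : ZMod n) := zmod_cast_eq _ _ (by
      obtain ⟨t, ht⟩ := h2; exact ⟨t, by linear_combination ht⟩)
    have hz3 : ((W : ℤ) : ZMod n) = ((R + 3*P : ℤ) : ZMod n) := zmod_cast_eq _ _ (by
      obtain ⟨t, ht⟩ := h3; exact ⟨t, by linear_combination ht⟩)
    have hz4 : ((57*R : ℤ) : ZMod n) = ((3*Q : ℤ) : ZMod n) := zmod_cast_eq _ _ (by
      obtain ⟨t, ht⟩ := h4; exact ⟨t, by linear_combination ht⟩)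
    push_cast at hz1 hz2 hz3 hz4
    have hcomm : redGL n g * redGL n AU = redGL n BU * redGL n g := by
      rw [← map_mul, ← map_mul]
      apply Units.ext
      have hval : ∀ u : Matrix.GeneralLinearGroup (Fin 2) ℤ,
          (redGL n u : Matrix (Fin 2) (Fin 2) (ZMod n))
            = (u : Matrix (Fin 2) (Fin 2) ℤ).map (Int.castRingHom (ZMod n)) := fun u => rfl
      rw [hval, hval]
      show ((!![P, Q; R, W] * !![7, 57; 1, 8]).map (Int.castRingHom (ZMod n)))
          = ((!![7, 19; 3, 8] * !![P, Q; R, W]).map (Int.castRingHom (ZMod n)))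
      ext i j
      fin_cases i <;> fin_cases j <;>
        simp [Matrix.map_apply, Matrix.mul_apply, Fin.sum_univ_two] <;>
        first
          | linear_combination (hz1 : ((Q : ℤ) : ZMod n) = 19*(R : ZMod n))
          | linear_combination hz2
          | linear_combination hz3
          | linear_combination hz4
    calc redGL n (g * AU * g⁻¹)
        = redGL n g * redGL n AU * (redGL n g)⁻¹ := by rw [map_mul, map_mul, map_inv]
      _ = redGL n BU * redGL n g * (redGL n g)⁻¹ := by rw [hcomm]
      _ = redGL n BU := mul_inv_cancel_right _ _


end NC

theorem stmt16
    (hAB : ∃ A B : Matrix.GeneralLinearGroup (Fin 2) ℤ, ¬IsConj A B ∧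
      ∀ n : ℕ, 1 ≤ n → IsConj (redGL n A) (redGL n B))
    (hcs : ∀ A B : Matrix.GeneralLinearGroup (Fin 2) ℤ, ¬IsConj A B →
      ∃ (Q : Type) (_ : Group Q) (_ : Finite Q)
        (q : Matrix.GeneralLinearGroup (Fin 2) ℤ →* Q), ¬IsConj (q A) (q B)) :
    ∃ Γ : Subgroup (Matrix.GeneralLinearGroup (Fin 2) ℤ), Γ.FiniteIndex ∧
      ∀ n : ℕ, 1 ≤ n → ¬((redGL n).ker ≤ Γ) := by
  obtain ⟨Q, instG, instF, q, hq⟩ := hcs NC.AU NC.BU NC.not_conj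
  refine ⟨q.ker, inferInstance, ?_⟩
  intro n hn hker
  obtain ⟨g, hg⟩ := NC.conj_mod n hn
  have hmem : g * NC.AU * g⁻¹ * NC.BU⁻¹ ∈ (redGL n).ker := by
    rw [MonoidHom.mem_ker, map_mul, map_inv, hg, mul_inv_cancel]
  have hq1 : q (g * NC.AU * g⁻¹ * NC.BU⁻¹) = 1 := hker hmem
  apply hq
  rw [map_mul, map_mul, map_mul, map_inv, map_inv, mul_inv_eq_one] at hq1
  exact isConj_iff.mpr ⟨q g, hq1⟩
end
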